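/- Let U ⊆ ℂ be an open connected set containing the real line and let f : ℂ → ℂ be analytic on U, with f(t) real and f(t) ≥ 0 for every real t, and f not identically zero on ℝ. Let H be a normed vector space and g : ℝ → H a continuous function such that the Lebesgue integral of the nonnegative function t ↦ ‖g(t)‖² f(t) over ℝ equals 0. Then g(t) = 0 for every t ∈ ℝ. -/

import Mathlib

open Filter MeasureTheory Topology

/-
The restriction `t ↦ (f t).re` of `f` to the real line is real analytic on all of `ℝ` and, since
`f` is real on `ℝ` and does not vanish identically there, it is not identically zero. Its zeros are
therefore isolated, hence countable, hence Lebesgue-null. The vanishing integral forces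
`‖g t‖² (f t).re = 0` almost everywhere, so `g = 0` almost everywhere, and continuity of `g`
upgrades this to `g ≡ 0`.
-/

theorem AnalyticAt.re_comp_ofReal {f : ℂ → ℂ} {x : ℝ} (hf : AnalyticAt ℂ f x) :
    AnalyticAt ℝ (fun t : ℝ => (f t).re) x :=
  Complex.reCLM.analyticAt _ |>.comp <|
    hf.restrictScalars.comp (Complex.ofRealCLM.analyticAt x)

theorem AnalyticOnNhd.ae_ne_zero_of_exists_ne_zero {E : Type*} [NormedAddCommGroup E]
    [NormedSpace ℝ E] {φ : ℝ → E} (hφ : AnalyticOnNhd ℝ φ Set.univ) (hne : ∃ t, φ t ≠ 0)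
    (μ : Measure ℝ) [NullSingletonClass μ] : ∀ᵐ t ∂μ, φ t ≠ 0 := by
  have hcodiscrete : ∀ᶠ t in codiscreteWithin Set.univ, φ t ≠ 0 := by
    refine (hφ.eqOn_zero_or_eventually_ne_zero_of_preconnected isPreconnected_univ).resolve_left ?_
    obtain ⟨t, ht⟩ := hne
    exact fun h => ht (h (Set.mem_univ t))
  rw [← Measure.restrict_univ (μ := μ)]
  exact ae_restrict_le_codiscreteWithin MeasurableSet.univ hcodiscrete

theorem Continuous.eq_zero_of_lintegral_norm_sq_mul_eq_zero {X H : Type*} [TopologicalSpace X]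
    [MeasurableSpace X] [OpensMeasurableSpace X] {μ : Measure X} [μ.IsOpenPosMeasure]
    [NormedAddCommGroup H] {g : X → H} (hg : Continuous g) {w : X → ℝ} (hw : Continuous w)
    (hw_nonneg : ∀ x, 0 ≤ w x) (hw_ne : ∀ᵐ x ∂μ, w x ≠ 0)
    (hint : ∫⁻ x, ENNReal.ofReal (‖g x‖ ^ 2 * w x) ∂μ = 0) : g = 0 := by
  have hmeas : AEMeasurable (fun x => ENNReal.ofReal (‖g x‖ ^ 2 * w x)) μ :=
    ((hg.norm.pow 2).mul hw).measurable.ennreal_ofReal.aemeasurable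
  have hae : g =ᵐ[μ] 0 := by
    filter_upwards [(lintegral_eq_zero_iff' hmeas).1 hint, hw_ne] with x hx hwx
    have hprod : ‖g x‖ ^ 2 * w x ≤ 0 := ENNReal.ofReal_eq_zero.1 hx
    have hgx : ‖g x‖ ^ 2 ≤ 0 :=
      nonpos_of_mul_nonpos_left hprod (lt_of_le_of_ne (hw_nonneg x) (Ne.symm hwx))
    simpa using hgx
  exact (hg.ae_eq_iff_eq μ continuous_const).1 hae

theorem stmt_6_general {H : Type*} [NormedAddCommGroup H]
    (U : Set ℂ)
    (hreal : ∀ t : ℝ, (t : ℂ) ∈ U)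
    (f : ℂ → ℂ) (hf : AnalyticOnNhd ℂ f U)
    (hfreal : ∀ t : ℝ, (f t).im = 0)
    (hfpos : ∀ t : ℝ, 0 ≤ (f t).re)
    (hfne : ∃ t : ℝ, f t ≠ 0)
    (g : ℝ → H) (hg : Continuous g)
    (hint : ∫⁻ t : ℝ, ENNReal.ofReal (‖g t‖ ^ 2 * (f t).re) = 0) :
    ∀ t : ℝ, g t = 0 := by
  have hre : AnalyticOnNhd ℝ (fun t : ℝ => (f t).re) Set.univ :=
    fun t _ => (hf t (hreal t)).re_comp_ofReal
  have hre_ne : ∃ t : ℝ, (f t).re ≠ 0 := by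
    obtain ⟨t, ht⟩ := hfne
    exact ⟨t, fun h => ht (Complex.ext h (hfreal t))⟩
  exact congrFun <| hg.eq_zero_of_lintegral_norm_sq_mul_eq_zero hre.continuous hfpos
    (hre.ae_ne_zero_of_exists_ne_zero hre_ne volume) hint

/-- Let `U ⊆ ℂ` be an open connected set containing the real line, `f : ℂ → ℂ`
analytic on `U`, real-valued and nonnegative on `ℝ` and not identically zero on `ℝ`.
Let `H` be a normed vector space and `g : ℝ → H` continuous with
`∫⁻ ‖g t‖² f t dt = 0`.  Then `g ≡ 0`. -/
theorem stmt_6 {H : Type*} [NormedAddCommGroup H] [NormedSpace ℝ H]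
    (U : Set ℂ) (hU : IsOpen U) (hUconn : IsConnected U)
    (hreal : ∀ t : ℝ, (t : ℂ) ∈ U)
    (f : ℂ → ℂ) (hf : AnalyticOnNhd ℂ f U)
    (hfreal : ∀ t : ℝ, (f t).im = 0)
    (hfpos : ∀ t : ℝ, 0 ≤ (f t).re)
    (hfne : ∃ t : ℝ, f t ≠ 0)
    (g : ℝ → H) (hg : Continuous g)
    (hint : ∫⁻ t : ℝ, ENNReal.ofReal (‖g t‖ ^ 2 * (f t).re) = 0) :
    ∀ t : ℝ, g t = 0 :=
  stmt_6_general U hreal f hf hfreal hfpos hfne g hg hint
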